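/- arXiv:2505.13234 — 3 statements merged into one kernel-verified Lean document; each statement's English description precedes it below -/
import Mathlib

section
/- For a continuous piecewise C¹ path X : [a,b] → ℝ^d and any two words w₁, w₂ over {1,…,d}, the signature pairing satisfies the shuffle identity ⟨σ(X), w₁ ⧢ w₂⟩ = ⟨σ(X), w₁⟩ · ⟨σ(X), w₂⟩. -/
/-!
With `S_w(t) = sigAux X a w t`, the head letter of `w` is the outermost integration:
`S_{x u}(t) = ∫_a^t S_u dX^x`. For `u = x u'`, `v = y v'`, integration by parts for primitives
of integrable functions (absolute continuity) writes `S_u(t) S_v(t)` as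
`∫_a^t (S_{u'} S_v dX^x + S_u S_{v'} dX^y)`, and by induction the two integrands are the sums of
`S_z` over the shuffles of `(u', v)` and of `(u, v')`, which is exactly the first-letter recursion
of `shuffles`. Since `sig` reads words backwards, one also needs that reversing words commutes
with shuffling (up to order), which follows from the last-letter recursion of `shuffles`.
-/

noncomputable def sigAux {d : ℕ} (X : ℝ → Fin d → ℝ) (a : ℝ) : List (Fin d) → ℝ → ℝ
  | [] => fun _ => 1
  | i :: w => fun t => ∫ s in a..t, sigAux X a w s * deriv (fun u => X u i) s

/-- `sig X a w t` is the signature coefficient `⟨σ(X|[a,t]), w⟩`, the iterated integral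
of the derivatives of the coordinates of `X` indexed by the word `w` (in reading order,
first letter innermost). -/
noncomputable def sig {d : ℕ} (X : ℝ → Fin d → ℝ) (a : ℝ) (w : List (Fin d)) (t : ℝ) : ℝ :=
  sigAux X a w.reverse t

/-- A continuous path, piecewise of class `C¹` on `[a,b]`. -/
def PiecewiseC1 {d : ℕ} (X : ℝ → Fin d → ℝ) (a b : ℝ) : Prop :=
  ContinuousOn X (Set.Icc a b) ∧
  ∃ (n : ℕ) (t : Fin (n + 1) → ℝ), t 0 = a ∧ t (Fin.last n) = b ∧ StrictMono t ∧
    ∀ i : Fin n, ContDiffOn ℝ 1 X (Set.Icc (t i.castSucc) (t i.succ))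

/-- The list of all shuffles (interleavings) of two words. -/
def shuffles {α : Type*} : List α → List α → List (List α)
  | [], ys => [ys]
  | xs, [] => [xs]
  | x :: xs, y :: ys =>
      (shuffles xs (y :: ys)).map (x :: ·) ++ (shuffles (x :: xs) ys).map (y :: ·)
  termination_by xs ys => xs.length + ys.length

/-- Shuffle product of two words, as an element of the free vector space on words. -/
noncomputable def shOne {α : Type*} (u v : List α) : List α →₀ ℝ :=
  ((shuffles u v).map (fun z => Finsupp.single z (1 : ℝ))).sum

section Shuffles

variable {α : Type*}

@[simp]
theorem shuffles_nil_left (v : List α) : shuffles [] v = [v] := by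
  cases v <;> simp [shuffles]

@[simp]
theorem shuffles_nil_right (u : List α) : shuffles u [] = [u] := by
  cases u <;> simp [shuffles]

theorem shuffles_cons_cons (x y : α) (xs ys : List α) :
    shuffles (x :: xs) (y :: ys) =
      (shuffles xs (y :: ys)).map (x :: ·) ++ (shuffles (x :: xs) ys).map (y :: ·) := by
  rw [shuffles]

theorem coe_shuffles_cons_cons (x y : α) (xs ys : List α) :
    (shuffles (x :: xs) (y :: ys) : Multiset (List α)) =
      (shuffles xs (y :: ys) : Multiset (List α)).map (x :: ·) +
        (shuffles (x :: xs) ys : Multiset (List α)).map (y :: ·) := by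
  rw [shuffles_cons_cons, ← Multiset.coe_add, Multiset.map_coe, Multiset.map_coe]

theorem coe_shuffles_append_singleton (p q : List α) (x y : α) :
    (shuffles (p ++ [x]) (q ++ [y]) : Multiset (List α)) =
      (shuffles p (q ++ [y]) : Multiset (List α)).map (· ++ [x]) +
        (shuffles (p ++ [x]) q : Multiset (List α)).map (· ++ [y]) := by
  match p, q with
  | [], [] =>
    simp only [List.nil_append, coe_shuffles_cons_cons, shuffles_nil_left, shuffles_nil_right,
      Multiset.coe_singleton, Multiset.map_singleton, Multiset.singleton_add, List.cons_append]
    exact Multiset.pair_comm _ _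
  | [], c :: q =>
    have ih := coe_shuffles_append_singleton [] q x y
    simp only [List.nil_append, List.cons_append] at ih ⊢
    simp only [coe_shuffles_cons_cons, ih, shuffles_nil_left, Multiset.map_add, Multiset.map_map,
      Function.comp_def, List.cons_append]
    simp only [Multiset.coe_singleton, Multiset.map_singleton, List.append_assoc, List.cons_append,
      List.nil_append, Multiset.map_coe, Multiset.singleton_add, Multiset.cons_coe,
      Multiset.coe_eq_coe]
    exact .swap _ _ _
  | a :: p, [] =>
    have ih := coe_shuffles_append_singleton p [] x y
    simp only [List.nil_append, List.cons_append] at ih ⊢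
    simp only [coe_shuffles_cons_cons, ih, shuffles_nil_right, Multiset.map_add, Multiset.map_map,
      Function.comp_def, List.cons_append]
    simp only [Multiset.map_coe, Multiset.coe_singleton, Multiset.map_singleton, List.append_assoc,
      List.cons_append, List.nil_append]
    exact add_right_comm _ _ _
  | a :: p, c :: q =>
    have ih₁ := coe_shuffles_append_singleton p (c :: q) x y
    have ih₂ := coe_shuffles_append_singleton (a :: p) q x y
    simp only [List.cons_append] at ih₁ ih₂ ⊢
    simp only [coe_shuffles_cons_cons, ih₁, ih₂, Multiset.map_add, Multiset.map_map,
      Function.comp_def, List.cons_append]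
    abel
termination_by p.length + q.length

theorem map_reverse_shuffles_perm (u v : List α) :
    ((shuffles u v).map List.reverse).Perm (shuffles u.reverse v.reverse) := by
  match u, v with
  | [], v => simp
  | u, [] => simp
  | x :: xs, y :: ys =>
    have ih₁ := map_reverse_shuffles_perm xs (y :: ys)
    have ih₂ := map_reverse_shuffles_perm (x :: xs) ys
    rw [← Multiset.coe_eq_coe, ← Multiset.map_coe] at ih₁ ih₂ ⊢
    rw [List.reverse_cons, List.reverse_cons, coe_shuffles_append_singleton, ← List.reverse_cons,
      ← List.reverse_cons, ← ih₁, ← ih₂, coe_shuffles_cons_cons]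
    simp only [Multiset.map_add, Multiset.map_map, Function.comp_def, List.reverse_cons]
termination_by u.length + v.length

end Shuffles

open MeasureTheory Set intervalIntegral

theorem intervalIntegral.integral_mul_integral_eq_integral_primitive {f g : ℝ → ℝ} {a b : ℝ}
    (hf : IntervalIntegrable f volume a b) (hg : IntervalIntegrable g volume a b) :
    (∫ x in a..b, f x) * (∫ x in a..b, g x) =
      ∫ x in a..b, f x * (∫ t in a..x, g t) + (∫ t in a..x, f t) * g x := by
  have hF := hf.absolutelyContinuousOnInterval_intervalIntegral left_mem_uIcc
  have hG := hg.absolutelyContinuousOnInterval_intervalIntegral left_mem_uIcc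
  have h := hF.integral_deriv_mul_eq_sub hG
  simp only [integral_same, mul_zero, sub_zero] at h
  rw [← h]
  refine integral_congr_ae ?_
  filter_upwards [hf.ae_hasDerivAt_integral, hg.ae_hasDerivAt_integral] with x hfx hgx hx
  have hx' : x ∈ uIcc a b := uIoc_subset_uIcc hx
  rw [(hfx hx' a left_mem_uIcc).deriv, (hgx hx' a left_mem_uIcc).deriv]

theorem IntervalIntegrable.list_sum {ι : Type*} {a b : ℝ} {L : List ι} {f : ι → ℝ → ℝ}
    (hf : ∀ i ∈ L, IntervalIntegrable (f i) volume a b) :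
    IntervalIntegrable (fun x => (L.map (f · x)).sum) volume a b := by
  induction L with
  | nil => simp
  | cons i L ih =>
    simp only [List.map_cons, List.sum_cons, List.forall_mem_cons] at hf ⊢
    exact hf.1.add (ih hf.2)

theorem intervalIntegral.integral_list_sum {ι : Type*} {a b : ℝ} {L : List ι}
    {f : ι → ℝ → ℝ} (hf : ∀ i ∈ L, IntervalIntegrable (f i) volume a b) :
    ∫ x in a..b, (L.map (f · x)).sum = (L.map fun i => ∫ x in a..b, f i x).sum := by
  induction L with
  | nil => simp
  | cons i L ih =>
    simp only [List.map_cons, List.sum_cons, List.forall_mem_cons] at hf ⊢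
    rw [integral_add hf.1 (IntervalIntegrable.list_sum hf.2), ih hf.2]

theorem sigAux_cons {d : ℕ} (X : ℝ → Fin d → ℝ) (a : ℝ) (i : Fin d) (w : List (Fin d))
    (t : ℝ) :
    sigAux X a (i :: w) t = ∫ s in a..t, sigAux X a w s * deriv (fun u => X u i) s := rfl

section Signature

variable {d : ℕ} {X : ℝ → Fin d → ℝ} {a : ℝ}

theorem continuousOn_sigAux {T : ℝ}
    (hX : ∀ i, IntervalIntegrable (deriv fun u => X u i) volume a T) (w : List (Fin d)) :
    ContinuousOn (sigAux X a w) (uIcc a T) := by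
  induction w with
  | nil => exact continuousOn_const
  | cons i w ih =>
    exact continuousOn_primitive_interval' ((hX i).continuousOn_mul ih) left_mem_uIcc

theorem intervalIntegrable_sigAux_mul {T : ℝ}
    (hX : ∀ i, IntervalIntegrable (deriv fun u => X u i) volume a T) (w : List (Fin d))
    (i : Fin d) :
    IntervalIntegrable (fun s => sigAux X a w s * deriv (fun u => X u i) s) volume a T :=
  (hX i).continuousOn_mul (continuousOn_sigAux hX w)

theorem sum_sigAux_shuffles {T : ℝ}
    (hX : ∀ i, IntervalIntegrable (deriv fun u => X u i) volume a T) (u v : List (Fin d)) :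
    ((shuffles u v).map (sigAux X a · T)).sum = sigAux X a u T * sigAux X a v T := by
  match u, v with
  | [], v => simp [sigAux]
  | u, [] => simp [sigAux]
  | x :: xs, y :: ys =>
    have hX_mono {s} (hs : s ∈ uIcc a T) i :
        IntervalIntegrable (deriv fun u => X u i) volume a s :=
      (hX i).mono_set (uIcc_subset_uIcc left_mem_uIcc hs)
    have ih₁ {s} (hs : s ∈ uIcc a T) := sum_sigAux_shuffles (T := s) (hX_mono hs) xs (y :: ys)
    have ih₂ {s} (hs : s ∈ uIcc a T) := sum_sigAux_shuffles (T := s) (hX_mono hs) (x :: xs) ys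
    calc ((shuffles (x :: xs) (y :: ys)).map (sigAux X a · T)).sum
      _ = (∫ s in a..T,
              ((shuffles xs (y :: ys)).map (sigAux X a · s)).sum * deriv (fun u => X u x) s) +
          ∫ s in a..T,
              ((shuffles (x :: xs) ys).map (sigAux X a · s)).sum * deriv (fun u => X u y) s := by
        simp only [shuffles_cons_cons, List.map_append, List.sum_append, List.map_map,
          Function.comp_def, sigAux_cons, ← List.sum_map_mul_right]
        rw [integral_list_sum, integral_list_sum] <;>
          exact fun z _ => intervalIntegrable_sigAux_mul hX z _
      _ = (∫ s in a..T, sigAux X a xs s * deriv (fun u => X u x) s * sigAux X a (y :: ys) s) +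
          ∫ s in a..T, sigAux X a (x :: xs) s * (sigAux X a ys s * deriv (fun u => X u y) s) := by
        congr 1 <;> refine integral_congr fun s hs => ?_
        · rw [ih₁ hs]; ring
        · rw [ih₂ hs]; ring
      _ = sigAux X a (x :: xs) T * sigAux X a (y :: ys) T := by
        rw [← intervalIntegral.integral_add
            ((intervalIntegrable_sigAux_mul hX xs x).mul_continuousOn (continuousOn_sigAux hX _))
            ((intervalIntegrable_sigAux_mul hX ys y).continuousOn_mul (continuousOn_sigAux hX _)),
          sigAux_cons X a x xs T, sigAux_cons X a y ys T,
          integral_mul_integral_eq_integral_primitive (intervalIntegrable_sigAux_mul hX xs x)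
            (intervalIntegrable_sigAux_mul hX ys y)]
        rfl
termination_by u.length + v.length

end Signature

theorem PiecewiseC1.intervalIntegrable_deriv {d : ℕ} {X : ℝ → Fin d → ℝ} {a b : ℝ}
    (hX : PiecewiseC1 X a b) (i : Fin d) :
    IntervalIntegrable (deriv fun u => X u i) volume a b := by
  obtain ⟨-, n, t, rfl, rfl, ht, hC1⟩ := hX
  have piece (j : Fin n) :
      IntervalIntegrable (deriv fun u => X u i) volume (t j.castSucc) (t j.succ) := by
    have h := contDiffOn_pi.mp (hC1 j) i
    rw [← uIcc_of_le (ht.monotone j.castSucc_le_succ)] at h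
    exact h.absolutelyContinuousOnInterval.intervalIntegrable_deriv
  suffices ∀ k, IntervalIntegrable (deriv fun u => X u i) volume (t 0) (t k) from this _
  intro k
  induction k using Fin.induction with
  | zero => exact .refl
  | succ j ih => exact ih.trans (piece j)

theorem sig_shuffle_identity_general {d : ℕ} {a b : ℝ} (X : ℝ → Fin d → ℝ)
    (hX : PiecewiseC1 X a b) (w₁ w₂ : List (Fin d)) :
    ((shuffles w₁ w₂).map (fun u => sig X a u b)).sum = sig X a w₁ b * sig X a w₂ b := by
  have hrev := ((map_reverse_shuffles_perm w₁ w₂).map (sigAux X a · b)).sum_eq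
  rw [List.map_map] at hrev
  exact hrev.trans (sum_sigAux_shuffles hX.intervalIntegrable_deriv _ _)

/-- Shuffle identity: for a continuous piecewise C¹ path, the signature pairing of a
shuffle of two words is the product of the signature pairings of the words. -/
theorem sig_shuffle_identity {d : ℕ} {a b : ℝ} (hab : a < b) (X : ℝ → Fin d → ℝ)
    (hX : PiecewiseC1 X a b) (w₁ w₂ : List (Fin d)) :
    ((shuffles w₁ w₂).map (fun u => sig X a u b)).sum = sig X a w₁ b * sig X a w₂ b :=
  sig_shuffle_identity_general X hX w₁ w₂
end

section
/- Let A ∈ ℝ^{r×r} be skew-symmetric and let x : [0,1] → ℝ^r be a C¹ integral curve of the linear vector field defined by A, i.e., x'(t) = A·x(t). Then for every word w over {1,…,r}, the signature σ(x) of x satisfies Σ_{i=1}^r (⟨σ(x), i i w⟩ + x_i(0)·⟨σ(x), i w⟩) = 0. -/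
section Aux

variable {r : ℕ} {A : Matrix (Fin r) (Fin r) ℝ} {x : ℝ → Fin r → ℝ}
  (hx : ∀ t ∈ Set.Icc (0 : ℝ) 1, HasDerivAt x (A.mulVec (x t)) t)

include hx

lemma sig_hasDerivAt_coord (i : Fin r) {t : ℝ} (ht : t ∈ Set.Icc (0 : ℝ) 1) :
    HasDerivAt (fun u => x u i) (A.mulVec (x t) i) t :=
  (hasDerivAt_pi.1 (hx t ht)) i

lemma sig_deriv_coord (i : Fin r) {t : ℝ} (ht : t ∈ Set.Icc (0 : ℝ) 1) :
    deriv (fun u => x u i) t = A.mulVec (x t) i :=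
  (sig_hasDerivAt_coord hx i ht).deriv

lemma sig_contOn_coord (i : Fin r) :
    ContinuousOn (fun t => x t i) (Set.Icc (0 : ℝ) 1) := fun t ht =>
  (sig_hasDerivAt_coord hx i ht).continuousAt.continuousWithinAt

lemma sig_contOn_deriv (i : Fin r) :
    ContinuousOn (fun t => deriv (fun u => x u i) t) (Set.Icc (0 : ℝ) 1) := by
  have h : ContinuousOn (fun t => A.mulVec (x t) i) (Set.Icc (0 : ℝ) 1) := by
    simp only [Matrix.mulVec, dotProduct]
    exact continuousOn_finset_sum _ fun j _ =>
      continuousOn_const.mul (sig_contOn_coord hx j)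
  exact h.congr fun t ht => sig_deriv_coord hx i ht

lemma sig_contOn_sigAux (l : List (Fin r)) :
    ContinuousOn (sigAux x 0 l) (Set.Icc (0 : ℝ) 1) := by
  induction l with
  | nil => exact continuousOn_const
  | cons j l ih =>
    show ContinuousOn (fun t => ∫ s in (0:ℝ)..t,
      sigAux x 0 l s * deriv (fun u => x u j) s) (Set.Icc (0 : ℝ) 1)
    have h : Set.uIcc (0:ℝ) 1 = Set.Icc (0:ℝ) 1 := by
      rw [Set.uIcc_of_le]; norm_num
    have hint : MeasureTheory.IntegrableOn
        (fun s => sigAux x 0 l s * deriv (fun u => x u j) s)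
        (Set.uIcc (0:ℝ) 1) MeasureTheory.volume := by
      rw [h]
      exact (ih.mul (sig_contOn_deriv hx j)).integrableOn_compact isCompact_Icc
    have := intervalIntegral.continuousOn_primitive_interval hint
    rwa [h] at this

omit hx in
lemma sig_uIcc_subset {t : ℝ} (ht : t ∈ Set.Icc (0 : ℝ) 1) :
    Set.uIcc (0:ℝ) t ⊆ Set.Icc (0:ℝ) 1 := by
  rw [Set.uIcc_of_le ht.1]
  exact Set.Icc_subset_Icc le_rfl ht.2

lemma sig_intervalIntegrable (l : List (Fin r)) (j : Fin r) {t : ℝ}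
    (ht : t ∈ Set.Icc (0 : ℝ) 1) :
    IntervalIntegrable (fun s => sigAux x 0 l s * deriv (fun u => x u j) s)
      MeasureTheory.volume 0 t :=
  (((sig_contOn_sigAux hx l).mul (sig_contOn_deriv hx j)).mono
    (sig_uIcc_subset ht)).intervalIntegrable

lemma sig_single (i : Fin r) {t : ℝ} (ht : t ∈ Set.Icc (0 : ℝ) 1) :
    sigAux x 0 [i] t = x t i - x 0 i := by
  show (∫ s in (0:ℝ)..t, sigAux x 0 [] s * deriv (fun u => x u i) s) = _
  have h1 : ∀ s ∈ Set.uIcc (0:ℝ) t,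
      HasDerivAt (fun u => x u i) (deriv (fun u => x u i) s) s := fun s hs => by
    have := sig_hasDerivAt_coord hx i (sig_uIcc_subset ht hs)
    rwa [← this.deriv] at this
  have h2 : IntervalIntegrable (fun s => deriv (fun u => x u i) s)
      MeasureTheory.volume 0 t := by
    have := sig_intervalIntegrable hx [] i ht
    simpa [sigAux] using this
  simp only [sigAux, one_mul]
  exact intervalIntegral.integral_eq_sub_of_hasDerivAt h1 h2

lemma sig_double (i : Fin r) {t : ℝ} (ht : t ∈ Set.Icc (0 : ℝ) 1) :
    sigAux x 0 [i, i] t = (x t i - x 0 i) ^ 2 / 2 := by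
  show (∫ s in (0:ℝ)..t, sigAux x 0 [i] s * deriv (fun u => x u i) s) = _
  have hcongr : Set.EqOn (fun s => sigAux x 0 [i] s * deriv (fun u => x u i) s)
      (fun s => (x s i - x 0 i) * deriv (fun u => x u i) s) (Set.uIcc (0:ℝ) t) :=
    fun s hs => by simp only; rw [sig_single hx i (sig_uIcc_subset ht hs)]
  rw [intervalIntegral.integral_congr hcongr]
  have h1 : ∀ s ∈ Set.uIcc (0:ℝ) t,
      HasDerivAt (fun u => (x u i - x 0 i) ^ 2 / 2)
        ((x s i - x 0 i) * deriv (fun u => x u i) s) s := by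
    intro s hs
    have hd := sig_hasDerivAt_coord hx i (sig_uIcc_subset ht hs)
    have hd' : HasDerivAt (fun u => x u i - x 0 i) (deriv (fun u => x u i) s) s := by
      rw [sig_deriv_coord hx i (sig_uIcc_subset ht hs)]
      exact hd.sub_const _
    have := ((hd'.fun_pow 2).div_const 2)
    refine this.congr_deriv ?_
    rw [sig_deriv_coord hx i (sig_uIcc_subset ht hs)]
    ring
  have h2 : IntervalIntegrable (fun s => (x s i - x 0 i) * deriv (fun u => x u i) s)
      MeasureTheory.volume 0 t :=
    ((((sig_contOn_coord hx i).sub continuousOn_const).mul (sig_contOn_deriv hx i)).mono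
      (sig_uIcc_subset ht)).intervalIntegrable
  rw [intervalIntegral.integral_eq_sub_of_hasDerivAt h1 h2]
  simp

omit hx in
lemma sig_skew_dot (hA : A.transpose = -A) (v : Fin r → ℝ) :
    dotProduct v (A.mulVec v) = 0 := by
  have h1 : dotProduct v (A.mulVec v) = dotProduct (Matrix.vecMul v A) v :=
    Matrix.dotProduct_mulVec v A v
  have h2 : Matrix.vecMul v A = -(A.mulVec v) := by
    rw [← Matrix.mulVec_transpose, hA, Matrix.neg_mulVec]
  have h3 : dotProduct v (A.mulVec v) = - dotProduct v (A.mulVec v) := by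
    calc dotProduct v (A.mulVec v)
        = dotProduct (Matrix.vecMul v A) v := h1
      _ = dotProduct (-(A.mulVec v)) v := by rw [h2]
      _ = -(dotProduct (A.mulVec v) v) := neg_dotProduct _ _
      _ = - dotProduct v (A.mulVec v) := by rw [dotProduct_comm]
  linarith

lemma sig_norm_const (hA : A.transpose = -A) {t : ℝ} (ht : t ∈ Set.Icc (0 : ℝ) 1) :
    ∑ i, x t i ^ 2 = ∑ i, x 0 i ^ 2 := by
  have h1 : ∀ s ∈ Set.uIcc (0:ℝ) t,
      HasDerivAt (fun u => ∑ i, x u i ^ 2) ((0:ℝ)) s := by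
    intro s hs
    have hs' := sig_uIcc_subset ht hs
    have hd : HasDerivAt (fun u => ∑ i, x u i ^ 2)
        (∑ i, 2 * x s i * A.mulVec (x s) i) s := by
      have := HasDerivAt.fun_sum (fun i (_ : i ∈ Finset.univ) =>
        ((sig_hasDerivAt_coord hx i hs').fun_pow 2))
      refine this.congr_deriv ?_
      refine Finset.sum_congr rfl fun i _ => ?_
      push_cast
      ring
    have hzero : (∑ i, 2 * x s i * A.mulVec (x s) i) = 0 := by
      have := sig_skew_dot hA (x s)
      simp only [dotProduct] at this
      calc (∑ i, 2 * x s i * A.mulVec (x s) i)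
          = 2 * ∑ i, x s i * A.mulVec (x s) i := by
            rw [Finset.mul_sum]; congr 1; funext i; ring
        _ = 0 := by rw [this]; ring
    rwa [hzero] at hd
  have h2 : IntervalIntegrable (fun _ : ℝ => (0:ℝ)) MeasureTheory.volume 0 t :=
    intervalIntegrable_const
  have := intervalIntegral.integral_eq_sub_of_hasDerivAt h1 h2
  simp only [intervalIntegral.integral_zero] at this
  linarith

lemma sig_key (hA : A.transpose = -A) :
    ∀ (l : List (Fin r)) {t : ℝ}, t ∈ Set.Icc (0 : ℝ) 1 →
      ∑ i, (sigAux x 0 (l ++ [i, i]) t + x 0 i * sigAux x 0 (l ++ [i]) t) = 0 := by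
  intro l
  induction l with
  | nil =>
    intro t ht
    simp only [List.nil_append]
    have : ∀ i : Fin r, sigAux x 0 [i, i] t + x 0 i * sigAux x 0 [i] t
        = x t i ^ 2 / 2 - x 0 i ^ 2 / 2 := by
      intro i
      rw [sig_double hx i ht, sig_single hx i ht]
      ring
    rw [Finset.sum_congr rfl fun i _ => this i, Finset.sum_sub_distrib]
    have hnorm := sig_norm_const hx hA ht
    rw [← Finset.sum_div, ← Finset.sum_div, hnorm]
    ring
  | cons j l ih =>
    intro t ht
    have hrw : ∀ i : Fin r,
        sigAux x 0 ((j :: l) ++ [i, i]) t + x 0 i * sigAux x 0 ((j :: l) ++ [i]) t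
        = ∫ s in (0:ℝ)..t, (sigAux x 0 (l ++ [i, i]) s
            + x 0 i * sigAux x 0 (l ++ [i]) s) * deriv (fun u => x u j) s := by
      intro i
      show (∫ s in (0:ℝ)..t, sigAux x 0 (l ++ [i, i]) s * deriv (fun u => x u j) s)
          + x 0 i * ∫ s in (0:ℝ)..t, sigAux x 0 (l ++ [i]) s * deriv (fun u => x u j) s = _
      rw [← intervalIntegral.integral_const_mul]
      rw [← intervalIntegral.integral_add (sig_intervalIntegrable hx (l ++ [i, i]) j ht)
        (by simpa [mul_assoc] using
          (sig_intervalIntegrable hx (l ++ [i]) j ht).const_mul (x 0 i))]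
      congr 1
      funext s
      ring
    rw [Finset.sum_congr rfl fun i _ => hrw i]
    rw [← intervalIntegral.integral_finset_sum (fun i _ => by
      have h1 := sig_intervalIntegrable hx (l ++ [i, i]) j ht
      have h2 := (sig_intervalIntegrable hx (l ++ [i]) j ht).const_mul (x 0 i)
      have := h1.add (by simpa [mul_assoc] using h2)
      simpa [add_mul, mul_assoc] using this)]
    have hzero : Set.EqOn
        (fun s => ∑ i, (sigAux x 0 (l ++ [i, i]) s
            + x 0 i * sigAux x 0 (l ++ [i]) s) * deriv (fun u => x u j) s)
        (fun _ => (0:ℝ)) (Set.uIcc (0:ℝ) t) := by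
      intro s hs
      have hs' := sig_uIcc_subset ht hs
      simp only
      rw [← Finset.sum_mul, ih hs', zero_mul]
    rw [intervalIntegral.integral_congr hzero]
    simp

end Aux

/-- For a C¹ integral curve `x` of the linear vector field of a skew-symmetric matrix
`A` on `[0,1]`, the signature satisfies, for every word `w`,
`∑ᵢ (⟨σ(x), i i w⟩ + xᵢ(0)·⟨σ(x), i w⟩) = 0`. -/
theorem integral_curve_skew_sig_relation (r : ℕ) (A : Matrix (Fin r) (Fin r) ℝ)
    (hA : A.transpose = -A) (x : ℝ → Fin r → ℝ)
    (hx : ∀ t ∈ Set.Icc (0 : ℝ) 1, HasDerivAt x (A.mulVec (x t)) t) :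
    ∀ w : List (Fin r),
      ∑ i, (sig x 0 (i :: i :: w) 1 + x 0 i * sig x 0 (i :: w) 1) = 0 := by
  intro w
  have h1 : (1:ℝ) ∈ Set.Icc (0:ℝ) 1 := by norm_num
  have := sig_key hx hA w.reverse h1
  simp only [sig, List.reverse_cons, List.append_assoc, List.singleton_append] at *
  convert this using 2
end

section
/- Let X : [a,b] → ℝ³ be a C¹ path with X₁(t) = t − a (so Ẋ₁ ≡ 1) and suppose for every word w, ⟨σ(X|[a,t]), 31w⟩ − ⟨σ(X|[a,t]), 2w⟩ + X₃(a)⟨σ(X|[a,t]), 1w⟩ = 0 for all t ∈ [a,b]. Applying this with w = ∅ gives ∫_a^t X₃(s) ds − X₃(a)(t−a) = X₂(t) − X₂(a) − X₃(a)(t−a) for all t; conclude that Ẋ₂(t) = X₃(t) for all t, i.e., X is Legendrian. -/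
/-! Since `X₁` is the time `t - a`, the relation for the empty word says
`∫ₐᵗ (X₃ - X₃(a)) = X₂(t) - X₂(a) - X₃(a)(t - a)`, i.e. `X₂(t) = X₂(a) + ∫ₐᵗ X₃`. Thus `X₂` is an
indefinite integral of the continuous `X₃`, and the fundamental theorem of calculus gives
`Ẋ₂ = X₃` on all of `[a, b]` (one-sidedly at the endpoints). -/

open MeasureTheory Set Filter Topology intervalIntegral

theorem integral_deriv_eq_sub_of_contDiffOn_Icc {f : ℝ → ℝ} {a b : ℝ} (hab : a ≤ b)
    (hf : ContDiffOn ℝ 1 f (Icc a b)) : ∫ x in a..b, deriv f x = f b - f a := by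
  rcases hab.eq_or_lt with rfl | hab
  · simp
  have hderiv : EqOn (deriv f) (derivWithin f (Icc a b)) (Ioo a b) := fun x hx =>
    (derivWithin_of_mem_nhds (Icc_mem_nhds hx.1 hx.2)).symm
  rw [integral_congr_Ioo_of_le hab.le hderiv]
  refine integral_eq_sub_of_hasDerivAt_of_le hab.le hf.continuousOn (fun x hx => ?_) ?_
  · rw [← hderiv hx]
    exact ((hf.differentiableOn one_ne_zero).differentiableAt
      (Icc_mem_nhds hx.1 hx.2)).hasDerivAt
  · exact (hf.continuousOn_derivWithin (uniqueDiffOn_Icc hab) le_rfl).intervalIntegrable_of_Icc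
      hab.le

theorem derivWithin_Icc_eq_of_eq_add_integral {f g : ℝ → ℝ} {a b : ℝ} (hab : a < b)
    (hg : ContinuousOn g (Icc a b)) (hf : ∀ t ∈ Icc a b, f t = f a + ∫ s in a..t, g s)
    {t : ℝ} (ht : t ∈ Icc a b) : derivWithin f (Icc a b) t = g t := by
  have : Fact (t ∈ Icc a b) := ⟨ht⟩
  have hint : HasDerivWithinAt (fun u => f a + ∫ s in a..u, g s) (g t) (Icc a b) t :=
    (integral_hasDerivWithinAt_right
      (hg.mono (uIcc_subset_Icc (left_mem_Icc.2 hab.le) ht)).intervalIntegrable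
      (hg.stronglyMeasurableAtFilter_nhdsWithin measurableSet_Icc t)
      (hg.continuousWithinAt ht)).const_add _
  exact (hint.congr_of_mem hf ht).derivWithin (uniqueDiffOn_Icc hab t ht)

section Signature

variable {d : ℕ} (X : ℝ → Fin d → ℝ) (a : ℝ)

theorem sig_singleton (i : Fin d) (t : ℝ) :
    sig X a [i] t = ∫ s in a..t, deriv (fun u => X u i) s := by
  simp [sig, sigAux]

theorem sig_pair (i j : Fin d) (t : ℝ) :
    sig X a [i, j] t =
      ∫ s in a..t, (∫ u in a..s, deriv (fun v => X v i) u) * deriv (fun u => X u j) s := by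
  simp [sig, sigAux]

variable {X} {b : ℝ}

theorem sig_singleton_of_contDiffOn (hX : ContDiffOn ℝ 1 X (Icc a b)) (i : Fin d) {t : ℝ}
    (ht : t ∈ Icc a b) : sig X a [i] t = X t i - X a i := by
  rw [sig_singleton]
  exact integral_deriv_eq_sub_of_contDiffOn_Icc ht.1
    ((contDiffOn_pi.1 hX i).mono (Icc_subset_Icc_right ht.2))

theorem sig_pair_of_time_coord (hX : ContDiffOn ℝ 1 X (Icc a b)) (i : Fin d) {j : Fin d}
    (hj : ∀ s ∈ Icc a b, X s j = s - a) {t : ℝ} (ht : t ∈ Icc a b) :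
    sig X a [i, j] t = ∫ s in a..t, (X s i - X a i) := by
  rw [sig_pair]
  refine integral_congr_Ioo_of_le ht.1 fun s hs => ?_
  have hs' : s ∈ Ioo a b := ⟨hs.1, hs.2.trans_le ht.2⟩
  have hderiv : deriv (fun u => X u j) s = 1 := by
    have hev : (fun u => X u j) =ᶠ[𝓝 s] fun u => u - a :=
      eventually_of_mem (Icc_mem_nhds hs'.1 hs'.2) hj
    simp [hev.deriv_eq]
  rw [hderiv, mul_one, ← sig_singleton]
  exact sig_singleton_of_contDiffOn a hX i (Ioo_subset_Icc_self hs')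

end Signature

/-- If `X : [a,b] → ℝ³` is C¹ with `X₁(t) = t − a` and, for all `t ∈ [a,b]` and all words
`w`, `⟨σ(X|[a,t]), 31w⟩ − ⟨σ(X|[a,t]), 2w⟩ + X₃(a)⟨σ(X|[a,t]), 1w⟩ = 0`, then
`Ẋ₂(t) = X₃(t)` for all `t ∈ [a,b]`, i.e. `X` is Legendrian.
(Letters 1,2,3 are `0,1,2 : Fin 3`.) -/
theorem legendrian_of_sig_relations {a b : ℝ} (hab : a < b)
    (X : ℝ → Fin 3 → ℝ) (hX : ContDiffOn ℝ 1 X (Set.Icc a b))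
    (h0 : ∀ t ∈ Set.Icc a b, X t 0 = t - a)
    (hsig : ∀ t ∈ Set.Icc a b, ∀ w : List (Fin 3),
      sig X a (2 :: 0 :: w) t - sig X a (1 :: w) t + X a 2 * sig X a (0 :: w) t = 0) :
    ∀ t ∈ Set.Icc a b, derivWithin (fun u => X u 1) (Set.Icc a b) t = X t 2 := by
  have hX₂ : ContinuousOn (fun s => X s 2) (Icc a b) := (contDiffOn_pi.1 hX 2).continuousOn
  have hX₁ : ∀ t ∈ Icc a b, X t 1 = X a 1 + ∫ s in a..t, X s 2 := by
    intro t ht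
    have hrel := hsig t ht []
    rw [sig_pair_of_time_coord a hX 2 h0 ht, sig_singleton_of_contDiffOn a hX 1 ht,
      sig_singleton_of_contDiffOn a hX 0 ht, h0 t ht, h0 a (left_mem_Icc.2 hab.le),
      integral_sub ((hX₂.mono (uIcc_subset_Icc (left_mem_Icc.2 hab.le) ht)).intervalIntegrable)
        intervalIntegrable_const, intervalIntegral.integral_const, smul_eq_mul] at hrel
    linarith
  exact fun t ht => derivWithin_Icc_eq_of_eq_add_integral hab hX₂ hX₁ ht
end
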